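/- arXiv:1508.07340 — 4 statements merged into one kernel-verified Lean document; each statement's English description precedes it below -/
import Mathlib

section
/- Let $f\in\mathcal C^\sigma([0,T];E)$ be a $\sigma$-Hölder continuous function with $f(0)=0$, and $0<\sigma<\beta<1$. Then the function $F(t)=t^{\beta-1}f(t)$, $0<t\le T$, belongs to the weighted Hölder space $\mathcal F^{\beta,\sigma}((0,T];E)$. -/
open Real Filter Set

/-- The weighted Hölder seminorm set of `F` on `(0,T]`:
all values `s^(1-β+σ) ‖F t - F s‖ / (t-s)^σ` for `0 ≤ s < t ≤ T`. -/
def holderSemiSet {E : Type*} [NormedAddCommGroup E] (T β σ : ℝ) (F : ℝ → E) : Set ℝ :=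
  {x | ∃ s t : ℝ, 0 ≤ s ∧ s < t ∧ t ≤ T ∧
    x = s ^ (1 - β + σ) * ‖F t - F s‖ / (t - s) ^ σ}

/-- `w_F(t) = sup_{0 ≤ s < t} s^(1-β+σ) ‖F t - F s‖ / (t-s)^σ`. -/
noncomputable def wF {E : Type*} [NormedAddCommGroup E] (β σ : ℝ) (F : ℝ → E) (t : ℝ) : ℝ :=
  sSup {x | ∃ s : ℝ, 0 ≤ s ∧ s < t ∧
    x = s ^ (1 - β + σ) * ‖F t - F s‖ / (t - s) ^ σ}

/-- Membership in the weighted Hölder space `𝓕^{β,σ}((0,T]; E)`. -/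
def MemF {E : Type*} [NormedAddCommGroup E] [NormedSpace ℝ E] (T β σ : ℝ) (F : ℝ → E) : Prop :=
  ContinuousOn F (Set.Ioc 0 T) ∧
  (∃ L : E, Tendsto (fun t : ℝ => t ^ (1 - β) • F t) (nhdsWithin 0 (Set.Ioi 0)) (nhds L)) ∧
  BddAbove (holderSemiSet T β σ F) ∧
  Tendsto (wF β σ F) (nhdsWithin 0 (Set.Ioi 0)) (nhds 0)

/-- The norm of the weighted Hölder space `𝓕^{β,σ}((0,T]; E)`. -/
noncomputable def holderNorm {E : Type*} [NormedAddCommGroup E] (T β σ : ℝ) (F : ℝ → E) : ℝ :=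
  sSup {x | ∃ t : ℝ, 0 < t ∧ t ≤ T ∧ x = t ^ (1 - β) * ‖F t‖} +
  sSup (holderSemiSet T β σ F)

/-- Mean-value-type inequality for rpow, proved algebraically. -/
lemma rpow_sub_le_aux {s t r : ℝ} (hs : 0 < s) (hst : s ≤ t) (hr : r ≤ 1) :
    t ^ r - s ^ r ≤ s ^ (r - 1) * (t - s) := by
  have ht : 0 < t := hs.trans_le hst
  have h1 : t ^ r = t ^ (r - 1) * t := by
    conv_lhs => rw [show r = (r - 1) + 1 by ring, Real.rpow_add_one ht.ne']
  have h2 : s ^ r = s ^ (r - 1) * s := by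
    conv_lhs => rw [show r = (r - 1) + 1 by ring, Real.rpow_add_one hs.ne']
  have h3 : t ^ (r - 1) ≤ s ^ (r - 1) :=
    Real.rpow_le_rpow_of_nonpos hs hst (by linarith)
  nlinarith [mul_le_mul_of_nonneg_right h3 ht.le]

/-- The key estimate. -/
lemma key_est {E : Type*} [NormedAddCommGroup E] [NormedSpace ℝ E]
    (T β σ : ℝ) (hσ : 0 < σ) (hσβ : σ < β) (hβ : β < 1) (hT : 0 < T)
    (f : ℝ → E) (C : ℝ)
    (hf : ∀ s ∈ Set.Icc (0 : ℝ) T, ∀ t ∈ Set.Icc (0 : ℝ) T, ‖f t - f s‖ ≤ C * |t - s| ^ σ)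
    (hf0 : f 0 = 0) (hC : 0 ≤ C) {s t : ℝ} (hs : 0 ≤ s) (hst : s < t) (htT : t ≤ T) :
    s ^ (1 - β + σ) * ‖t ^ (β - 1) • f t - s ^ (β - 1) • f s‖ / (t - s) ^ σ
      ≤ 2 * C * s ^ σ := by
  have hβσ : (0:ℝ) < 1 - β + σ := by linarith
  rcases eq_or_lt_of_le hs with h0 | hspos
  · rw [← h0, Real.zero_rpow hβσ.ne', Real.zero_rpow hσ.ne', zero_mul, zero_div]
    positivity
  · have ht : 0 < t := hspos.trans hst
    have hts : 0 < t - s := by linarith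
    have hsT : s ≤ T := le_trans hst.le htT
    rw [div_le_iff₀ (Real.rpow_pos_of_pos hts σ)]
    -- Hölder bounds on f
    have hfts : ‖f t - f s‖ ≤ C * (t - s) ^ σ := by
      have := hf s ⟨hs, hsT⟩ t ⟨ht.le, htT⟩
      rwa [abs_of_pos hts] at this
    have hfs : ‖f s‖ ≤ C * s ^ σ := by
      have := hf 0 ⟨le_refl 0, hT.le⟩ s ⟨hs, hsT⟩
      rwa [hf0, sub_zero, sub_zero, abs_of_nonneg hs] at this
    have hba : t ^ (β - 1) ≤ s ^ (β - 1) :=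
      Real.rpow_le_rpow_of_nonpos hspos hst.le (by linarith)
    have hba' : 0 ≤ s ^ (β - 1) - t ^ (β - 1) := by linarith
    -- norm split
    have hnorm : ‖t ^ (β - 1) • f t - s ^ (β - 1) • f s‖ ≤
        t ^ (β - 1) * ‖f t - f s‖ + (s ^ (β - 1) - t ^ (β - 1)) * ‖f s‖ := by
      have hdec : t ^ (β - 1) • f t - s ^ (β - 1) • f s =
          t ^ (β - 1) • (f t - f s) + (t ^ (β - 1) - s ^ (β - 1)) • f s := by
        rw [smul_sub, sub_smul]; abel
      rw [hdec]
      refine le_trans (norm_add_le _ _) ?_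
      rw [norm_smul, norm_smul, Real.norm_eq_abs, Real.norm_eq_abs,
        abs_of_pos (Real.rpow_pos_of_pos ht _), abs_of_nonpos (by linarith), neg_sub]
    -- main chain
    have P1 : s ^ (1 - β + σ) * t ^ (β - 1) ≤ s ^ σ := by
      calc s ^ (1 - β + σ) * t ^ (β - 1) ≤ s ^ (1 - β + σ) * s ^ (β - 1) := by
            exact mul_le_mul_of_nonneg_left hba (Real.rpow_nonneg hs _)
        _ = s ^ σ := by rw [← Real.rpow_add hspos]; congr 1; ring
    have P2 : s ^ (1 - β + σ) * ((s ^ (β - 1) - t ^ (β - 1)) * s ^ σ) ≤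
        s ^ σ * (t - s) ^ σ := by
      have hcoll : s ^ (1 - β + σ) * s ^ σ = s ^ (1 - β + 2 * σ) := by
        rw [← Real.rpow_add hspos]; congr 1; ring
      rw [show s ^ (1 - β + σ) * ((s ^ (β - 1) - t ^ (β - 1)) * s ^ σ)
          = s ^ (1 - β + σ) * s ^ σ * (s ^ (β - 1) - t ^ (β - 1)) by ring, hcoll]
      rcases le_total (t - s) s with hc | hc
      · -- t - s ≤ s
        have haux : t ^ (1 - β) - s ^ (1 - β) ≤ s ^ (-β) * (t - s) := by
          have := rpow_sub_le_aux hspos hst.le (r := 1 - β) (by linarith)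
          rwa [show (1 - β) - 1 = -β by ring] at this
        have e1 : t ^ (β - 1) * t ^ (1 - β) = 1 := by
          rw [← Real.rpow_add ht]; norm_num
        have e2 : s ^ (β - 1) * s ^ (1 - β) = 1 := by
          rw [← Real.rpow_add hspos]; norm_num
        have hid : s ^ (β - 1) - t ^ (β - 1)
            = s ^ (β - 1) * t ^ (β - 1) * (t ^ (1 - β) - s ^ (1 - β)) := by
          linear_combination t ^ (β - 1) * e2 - s ^ (β - 1) * e1
        have hsb1 : (0:ℝ) ≤ s ^ (β - 1) := Real.rpow_nonneg hs _
        have step1 : s ^ (β - 1) - t ^ (β - 1)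
            ≤ s ^ (β - 1) * s ^ (β - 1) * (s ^ (-β) * (t - s)) := by
          rw [hid]
          have h1 : s ^ (β - 1) * t ^ (β - 1) * (t ^ (1 - β) - s ^ (1 - β))
              ≤ s ^ (β - 1) * s ^ (β - 1) * (t ^ (1 - β) - s ^ (1 - β)) := by
            have hnn : (0:ℝ) ≤ t ^ (1 - β) - s ^ (1 - β) := by
              have := Real.rpow_le_rpow hspos.le hst.le (by linarith : (0:ℝ) ≤ 1 - β)
              linarith
            nlinarith [mul_le_mul_of_nonneg_right hba hnn, hsb1]
          refine h1.trans ?_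
          exact mul_le_mul_of_nonneg_left haux (by positivity)
        calc s ^ (1 - β + 2 * σ) * (s ^ (β - 1) - t ^ (β - 1))
            ≤ s ^ (1 - β + 2 * σ) * (s ^ (β - 1) * s ^ (β - 1) * (s ^ (-β) * (t - s))) :=
              mul_le_mul_of_nonneg_left step1 (Real.rpow_nonneg hs _)
          _ = s ^ (2 * σ - 1) * (t - s) := by
              have comb : s ^ (1 - β + 2 * σ) * (s ^ (β - 1) * s ^ (β - 1) * s ^ (-β))
                  = s ^ (2 * σ - 1) := by
                rw [← Real.rpow_add hspos, ← Real.rpow_add hspos, ← Real.rpow_add hspos]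
                congr 1; ring
              linear_combination (t - s) * comb
          _ = s ^ (2 * σ - 1) * ((t - s) ^ (1 - σ) * (t - s) ^ σ) := by
              rw [← Real.rpow_add hts]; norm_num
          _ ≤ s ^ (2 * σ - 1) * (s ^ (1 - σ) * (t - s) ^ σ) := by
              refine mul_le_mul_of_nonneg_left ?_ (Real.rpow_nonneg hs _)
              exact mul_le_mul_of_nonneg_right
                (Real.rpow_le_rpow hts.le hc (by linarith)) (Real.rpow_nonneg hts.le _)
          _ = s ^ σ * (t - s) ^ σ := by
              have comb : s ^ (2 * σ - 1) * s ^ (1 - σ) = s ^ σ := by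
                rw [← Real.rpow_add hspos]; congr 1; ring
              linear_combination (t - s) ^ σ * comb
      · -- s ≤ t - s
        have step : s ^ (β - 1) - t ^ (β - 1) ≤ s ^ (β - 1) := by
          have := Real.rpow_nonneg ht.le (β - 1); linarith
        calc s ^ (1 - β + 2 * σ) * (s ^ (β - 1) - t ^ (β - 1))
            ≤ s ^ (1 - β + 2 * σ) * s ^ (β - 1) :=
              mul_le_mul_of_nonneg_left step (Real.rpow_nonneg hs _)
          _ = s ^ σ * s ^ σ := by
              rw [← Real.rpow_add hspos, ← Real.rpow_add hspos]; congr 1; ring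
          _ ≤ s ^ σ * (t - s) ^ σ := mul_le_mul_of_nonneg_left
              (Real.rpow_le_rpow hspos.le hc hσ.le) (Real.rpow_nonneg hs _)
    calc s ^ (1 - β + σ) * ‖t ^ (β - 1) • f t - s ^ (β - 1) • f s‖
        ≤ s ^ (1 - β + σ) * (t ^ (β - 1) * (C * (t - s) ^ σ)
            + (s ^ (β - 1) - t ^ (β - 1)) * (C * s ^ σ)) := by
          refine mul_le_mul_of_nonneg_left (hnorm.trans ?_) (Real.rpow_nonneg hs _)
          gcongr
        _ ≤ 2 * C * s ^ σ * (t - s) ^ σ := by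
          have h1 := mul_le_mul_of_nonneg_right P1 (mul_nonneg hC (Real.rpow_nonneg hts.le σ))
          have h2 := mul_le_mul_of_nonneg_right P2 hC
          nlinarith [Real.rpow_nonneg hts.le σ, Real.rpow_nonneg hs σ]


/-- `0 ≤ C` follows from the Hölder estimate. -/
lemma C_nonneg {E : Type*} [NormedAddCommGroup E]
    (T σ : ℝ) (hσ : 0 < σ) (hT : 0 < T) (f : ℝ → E) (C : ℝ)
    (hf : ∀ s ∈ Set.Icc (0 : ℝ) T, ∀ t ∈ Set.Icc (0 : ℝ) T, ‖f t - f s‖ ≤ C * |t - s| ^ σ) :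
    0 ≤ C := by
  have h := hf 0 ⟨le_refl 0, hT.le⟩ T ⟨hT.le, le_refl T⟩
  rw [sub_zero, abs_of_pos hT] at h
  nlinarith [Real.rpow_pos_of_pos hT σ, norm_nonneg (f T - f 0)]

/-- `C * t ^ σ → 0` as `t → 0⁺`. -/
lemma tendsto_C_rpow (C σ : ℝ) (hσ : 0 < σ) :
    Tendsto (fun t : ℝ => C * t ^ σ) (nhdsWithin 0 (Set.Ioi 0)) (nhds 0) := by
  have h : ContinuousAt (fun t : ℝ => C * t ^ σ) 0 :=
    continuousAt_const.mul (Real.continuousAt_rpow_const 0 σ (Or.inr hσ.le))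
  have h0 : (fun t : ℝ => C * t ^ σ) 0 = 0 := by
    simp [Real.zero_rpow hσ.ne']
  apply tendsto_nhdsWithin_of_tendsto_nhds
  simpa [Real.zero_rpow hσ.ne'] using h.tendsto

/-- If `f : [0,T] → E` is `σ`-Hölder continuous with `f(0) = 0` and `0 < σ < β < 1`,
then `F(t) = t^(β-1) • f(t)` belongs to the weighted Hölder space `𝓕^{β,σ}((0,T];E)`. -/
theorem stmt3 {E : Type*} [NormedAddCommGroup E] [NormedSpace ℝ E]
    (T β σ : ℝ) (hσ : 0 < σ) (hσβ : σ < β) (hβ : β < 1) (hT : 0 < T)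
    (f : ℝ → E) (C : ℝ)
    (hf : ∀ s ∈ Set.Icc (0 : ℝ) T, ∀ t ∈ Set.Icc (0 : ℝ) T, ‖f t - f s‖ ≤ C * |t - s| ^ σ)
    (hf0 : f 0 = 0) :
    MemF T β σ (fun t : ℝ => t ^ (β - 1) • f t) := by
  have hC : 0 ≤ C := C_nonneg T σ hσ hT f C hf
  have hβσ : (0:ℝ) < 1 - β + σ := by linarith
  -- bound ‖f t‖ for t ∈ [0,T]
  have hfb : ∀ t ∈ Set.Icc (0 : ℝ) T, ‖f t‖ ≤ C * t ^ σ := by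
    intro t ht
    have := hf 0 ⟨le_refl 0, hT.le⟩ t ht
    rwa [hf0, sub_zero, sub_zero, abs_of_nonneg ht.1] at this
  refine ⟨?_, ?_, ?_, ?_⟩
  · -- continuity
    have hfc : ContinuousOn f (Set.Icc 0 T) := by
      intro x hx
      rw [ContinuousWithinAt, tendsto_iff_norm_sub_tendsto_zero]
      apply squeeze_zero' (g := fun t => C * |t - x| ^ σ)
      · exact Eventually.of_forall fun t => norm_nonneg _
      · filter_upwards [self_mem_nhdsWithin] with t ht
        exact hf x hx t ht
      · have h : ContinuousAt (fun t : ℝ => C * |t - x| ^ σ) x := by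
          exact continuousAt_const.mul
            (((continuous_id.sub continuous_const).abs.continuousAt).rpow_const (Or.inr hσ.le))
        apply tendsto_nhdsWithin_of_tendsto_nhds
        simpa [Real.zero_rpow hσ.ne'] using h.tendsto
    refine ContinuousOn.smul ?_ (hfc.mono Set.Ioc_subset_Icc_self)
    exact fun t ht => (Real.continuousAt_rpow_const t (β - 1) (Or.inl ht.1.ne')).continuousWithinAt
  · -- limit
    refine ⟨0, ?_⟩
    have hft : Tendsto f (nhdsWithin 0 (Set.Ioi 0)) (nhds 0) := by
      apply squeeze_zero_norm' (a := fun t => C * t ^ σ)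
      · filter_upwards [Ioc_mem_nhdsGT_of_mem (⟨le_refl 0, hT⟩ : (0:ℝ) ∈ Set.Ico 0 T)]
          with t ht
        exact hfb t ⟨ht.1.le, ht.2⟩
      · exact tendsto_C_rpow C σ hσ
    refine hft.congr' ?_
    filter_upwards [self_mem_nhdsWithin] with t ht
    rw [smul_smul, ← Real.rpow_add ht]
    norm_num
  · -- bounded above
    refine ⟨2 * C * T ^ σ, ?_⟩
    rintro x ⟨s, t, hs, hst, htT, rfl⟩
    refine (key_est T β σ hσ hσβ hβ hT f C hf hf0 hC hs hst htT).trans ?_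
    have : s ^ σ ≤ T ^ σ := Real.rpow_le_rpow hs (hst.le.trans htT) hσ.le
    nlinarith
  · -- wF → 0
    apply squeeze_zero' (g := fun t => 2 * C * t ^ σ)
    · filter_upwards [Ioc_mem_nhdsGT_of_mem (⟨le_refl 0, hT⟩ : (0:ℝ) ∈ Set.Ico 0 T)]
        with t ht
      have h0S : (0:ℝ) ∈ {x | ∃ s : ℝ, 0 ≤ s ∧ s < t ∧
          x = s ^ (1 - β + σ) * ‖(fun u : ℝ => u ^ (β - 1) • f u) t
            - (fun u : ℝ => u ^ (β - 1) • f u) s‖ / (t - s) ^ σ} :=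
        ⟨0, le_refl 0, ht.1, by simp [Real.zero_rpow hβσ.ne']⟩
      have hub : ∀ x ∈ {x | ∃ s : ℝ, 0 ≤ s ∧ s < t ∧
          x = s ^ (1 - β + σ) * ‖(fun u : ℝ => u ^ (β - 1) • f u) t
            - (fun u : ℝ => u ^ (β - 1) • f u) s‖ / (t - s) ^ σ}, x ≤ 2 * C * t ^ σ := by
        rintro x ⟨s, hs, hst, rfl⟩
        refine (key_est T β σ hσ hσβ hβ hT f C hf hf0 hC hs hst ht.2).trans ?_
        have : s ^ σ ≤ t ^ σ := Real.rpow_le_rpow hs hst.le hσ.le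
        nlinarith
      exact le_csSup ⟨2 * C * t ^ σ, hub⟩ h0S
    · filter_upwards [Ioc_mem_nhdsGT_of_mem (⟨le_refl 0, hT⟩ : (0:ℝ) ∈ Set.Ico 0 T)]
        with t ht
      have hub : ∀ x ∈ {x | ∃ s : ℝ, 0 ≤ s ∧ s < t ∧
          x = s ^ (1 - β + σ) * ‖(fun u : ℝ => u ^ (β - 1) • f u) t
            - (fun u : ℝ => u ^ (β - 1) • f u) s‖ / (t - s) ^ σ}, x ≤ 2 * C * t ^ σ := by
        rintro x ⟨s, hs, hst, rfl⟩
        refine (key_est T β σ hσ hσβ hβ hT f C hf hf0 hC hs hst ht.2).trans ?_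
        have : s ^ σ ≤ t ^ σ := Real.rpow_le_rpow hs hst.le hσ.le
        nlinarith
      exact Real.sSup_le hub (mul_nonneg (by linarith) (Real.rpow_nonneg ht.1.le σ))
    · have := tendsto_C_rpow (2 * C) σ hσ
      simpa [mul_assoc] using this
end

section
/- Let $0<\beta<1$, $0<\sigma<1$, $\eta,\rho>0$ with $\eta+\rho<1$. Then for $0<s<t$, $\int_s^t (t-r)^{-\eta} r^{\beta-1}\,dr \le B(\eta+\rho,1-\eta)\, s^{\beta-\eta-\rho}\,(t-s)^{\rho}$, where $B$ is the Beta function. -/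
open MeasureTheory

/-- The Euler Beta function `B(x,y) = ∫₀¹ u^(x-1) (1-u)^(y-1) du`. -/
noncomputable def betaFn (x y : ℝ) : ℝ :=
  ∫ u in (0:ℝ)..1, u ^ (x - 1) * (1 - u) ^ (y - 1)

/-- Let `0 < β < 1`, `0 < σ < 1`, `η, ρ > 0` with `η + ρ < 1` (and `β ≤ η + ρ`).
Then for `0 < s < t`,
`∫ₛᵗ (t-r)^(-η) r^(β-1) dr ≤ B(η+ρ, 1-η) s^(β-η-ρ) (t-s)^ρ`. -/
theorem stmt9 (β σ η ρ : ℝ) (hβ0 : 0 < β) (hβ1 : β < 1) (hσ0 : 0 < σ) (hσ1 : σ < 1)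
    (hη : 0 < η) (hρ : 0 < ρ) (hηρ : η + ρ < 1) (hβηρ : β ≤ η + ρ)
    (s t : ℝ) (hs : 0 < s) (hst : s < t) :
    (∫ r in s..t, (t - r) ^ (-η) * r ^ (β - 1))
      ≤ betaFn (η + ρ) (1 - η) * s ^ (β - η - ρ) * (t - s) ^ ρ := by
  have hc0 : (0:ℝ) < t - s := sub_pos.2 hst
  have hη1 : -1 < -η := by linarith
  have hηρ1 : (-1:ℝ) < η + ρ - 1 := by linarith
  set m : ℝ := (s + t) / 2 with hm
  have hsm : s < m := by simp only [hm]; linarith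
  have hmt : m < t := by simp only [hm]; linarith
  -- integrability of (t - r)^(-η) on any interval
  have hIt : ∀ a b : ℝ, IntervalIntegrable (fun r : ℝ => (t - r) ^ (-η)) volume a b := by
    intro a b
    have := (intervalIntegral.intervalIntegrable_rpow' (a := t - a) (b := t - b) hη1).comp_sub_left t
    simpa using this
  have hIs : ∀ a b : ℝ, IntervalIntegrable (fun r : ℝ => (r - s) ^ (η + ρ - 1)) volume a b := by
    intro a b
    have := (intervalIntegral.intervalIntegrable_rpow' (a := a - s) (b := b - s) hηρ1).comp_sub_right s
    simpa using this
  -- integrability of the LHS integrand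
  have hI1 : IntervalIntegrable (fun r : ℝ => (t - r) ^ (-η) * r ^ (β - 1)) volume s t := by
    apply (hIt s t).mul_continuousOn
    refine ContinuousOn.rpow_const continuousOn_id fun x hx => Or.inl ?_
    rw [Set.uIcc_of_le hst.le] at hx
    exact ne_of_gt (lt_of_lt_of_le hs hx.1)
  -- integrability of the comparison integrand
  have hI2 : IntervalIntegrable
      (fun r : ℝ => (t - r) ^ (-η) * (r - s) ^ (η + ρ - 1)) volume s t := by
    have hA : IntervalIntegrable
        (fun r : ℝ => (t - r) ^ (-η) * (r - s) ^ (η + ρ - 1)) volume s m := by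
      apply (hIs s m).continuousOn_mul
      refine ContinuousOn.rpow_const (continuousOn_const.sub continuousOn_id)
        fun x hx => Or.inl ?_
      rw [Set.uIcc_of_le hsm.le] at hx
      have : x < t := lt_of_le_of_lt hx.2 hmt
      exact ne_of_gt (by linarith)
    have hB : IntervalIntegrable
        (fun r : ℝ => (t - r) ^ (-η) * (r - s) ^ (η + ρ - 1)) volume m t := by
      apply (hIt m t).mul_continuousOn
      refine ContinuousOn.rpow_const (continuousOn_id.sub continuousOn_const)
        fun x hx => Or.inl ?_
      rw [Set.uIcc_of_le hmt.le] at hx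
      have : s < x := lt_of_lt_of_le hsm hx.1
      exact ne_of_gt (by linarith)
    exact hA.trans hB
  -- the substitution identity
  have key : (∫ r in s..t, (t - r) ^ (-η) * (r - s) ^ (η + ρ - 1))
      = betaFn (η + ρ) (1 - η) * (t - s) ^ ρ := by
    have h1 := intervalIntegral.integral_comp_mul_add (a := (0:ℝ)) (b := 1)
      (f := fun y => (t - y) ^ (-η) * (y - s) ^ (η + ρ - 1)) (c := t - s) hc0.ne' s
    simp only [mul_zero, zero_add, mul_one, sub_add_cancel, smul_eq_mul] at h1
    have h2 : (∫ u in (0:ℝ)..1, (t - ((t - s) * u + s)) ^ (-η)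
        * (((t - s) * u + s) - s) ^ (η + ρ - 1))
        = (t - s) ^ (ρ - 1) * betaFn (η + ρ) (1 - η) := by
      rw [betaFn, ← intervalIntegral.integral_const_mul]
      apply intervalIntegral.integral_congr
      intro u hu
      rw [Set.uIcc_of_le zero_le_one] at hu
      have hu0 : (0:ℝ) ≤ u := hu.1
      have hu1 : u ≤ 1 := hu.2
      dsimp only
      have e1 : t - ((t - s) * u + s) = (t - s) * (1 - u) := by ring
      have e2 : (t - s) * u + s - s = (t - s) * u := by ring
      rw [e1, e2, Real.mul_rpow hc0.le (by linarith), Real.mul_rpow hc0.le hu0]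
      rw [show (1:ℝ) - η - 1 = -η by ring]
      have e3 : (t - s) ^ (-η) * (t - s) ^ (η + ρ - 1) = (t - s) ^ (ρ - 1) := by
        rw [← Real.rpow_add hc0]; congr 1; ring
      rw [← e3]
      ring
    rw [h2] at h1
    have : (∫ r in s..t, (t - r) ^ (-η) * (r - s) ^ (η + ρ - 1))
        = (t - s) * ((t - s) ^ (ρ - 1) * betaFn (η + ρ) (1 - η)) := by
      rw [h1]; field_simp
    rw [this, ← mul_assoc, mul_comm (t - s) _, ← Real.rpow_add_one hc0.ne' (ρ - 1)]
    ring_nf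
  -- pointwise comparison on Ioc s t
  have hmono : (∫ r in s..t, (t - r) ^ (-η) * r ^ (β - 1))
      ≤ ∫ r in s..t, ((t - r) ^ (-η) * (r - s) ^ (η + ρ - 1)) * s ^ (β - η - ρ) := by
    rw [intervalIntegral.integral_of_le hst.le, intervalIntegral.integral_of_le hst.le]
    apply setIntegral_mono_on hI1.1 (hI2.mul_const _).1 measurableSet_Ioc
    intro r hr
    rcases hr with ⟨hr1, hr2⟩
    have hr0 : 0 < r := lt_trans hs hr1
    have hrs : 0 < r - s := sub_pos.2 hr1
    have htr : 0 ≤ t - r := by linarith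
    have hb : r ^ (β - 1) ≤ (r - s) ^ (η + ρ - 1) * s ^ (β - η - ρ) := by
      have e : β - 1 = (η + ρ - 1) + (β - η - ρ) := by ring
      rw [e, Real.rpow_add hr0]
      apply mul_le_mul
      · exact Real.rpow_le_rpow_of_nonpos hrs (by linarith) (by linarith)
      · exact Real.rpow_le_rpow_of_nonpos hs hr1.le (by linarith)
      · positivity
      · positivity
    calc (t - r) ^ (-η) * r ^ (β - 1)
        ≤ (t - r) ^ (-η) * ((r - s) ^ (η + ρ - 1) * s ^ (β - η - ρ)) := by
          apply mul_le_mul_of_nonneg_left hb (Real.rpow_nonneg htr _)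
      _ = ((t - r) ^ (-η) * (r - s) ^ (η + ρ - 1)) * s ^ (β - η - ρ) := by ring
  calc (∫ r in s..t, (t - r) ^ (-η) * r ^ (β - 1))
      ≤ ∫ r in s..t, ((t - r) ^ (-η) * (r - s) ^ (η + ρ - 1)) * s ^ (β - η - ρ) := hmono
    _ = (∫ r in s..t, (t - r) ^ (-η) * (r - s) ^ (η + ρ - 1)) * s ^ (β - η - ρ) := by
        rw [← intervalIntegral.integral_mul_const]
    _ = betaFn (η + ρ) (1 - η) * s ^ (β - η - ρ) * (t - s) ^ ρ := by rw [key]; ring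
end

section
/- Let $0<\eta<\frac12$ and $\beta>0$. For $0\le s<t$, $\int_s^t (t-r)^{-2\eta}\, r^{2(\beta-\eta)}\,dr \le B(\tfrac12+\beta,\,1-2\eta)\, t^{\frac12+\beta-2\eta}\,(t-s)^{\frac12+\beta-2\eta}$, provided $\frac12+\beta-2\eta>0$ and $\beta-\frac12>-1$. -/
open MeasureTheory

lemma aux_beta_integrable {a b : ℝ} (ha : -1 < a) (hb : -1 < b) :
    IntervalIntegrable (fun u : ℝ => u ^ a * (1 - u) ^ b) volume 0 1 := by
  have h1 : IntervalIntegrable (fun u : ℝ => u ^ a * (1 - u) ^ b) volume 0 (1/2) := by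
    apply (intervalIntegral.intervalIntegrable_rpow' ha).mul_continuousOn
    apply ContinuousOn.rpow_const (by fun_prop)
    intro x hx
    rw [Set.uIcc_of_le (by norm_num)] at hx
    left
    have := hx.2
    intro h; nlinarith
  have h2 : IntervalIntegrable (fun u : ℝ => u ^ a * (1 - u) ^ b) volume (1/2) 1 := by
    have base : IntervalIntegrable (fun x : ℝ => x ^ b) volume 0 (1/2) :=
      intervalIntegral.intervalIntegrable_rpow' hb
    have comp := (base.comp_sub_left 1).symm
    norm_num at comp
    apply comp.continuousOn_mul
    apply ContinuousOn.rpow_const (by fun_prop)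
    intro x hx
    rw [Set.uIcc_of_le (by norm_num)] at hx
    left
    have := hx.1
    intro h; nlinarith
  exact h1.trans h2

lemma aux_interval_integrable {a b s t : ℝ} (ha : -1 < a) (hb : -1 < b) (hst : s < t) :
    IntervalIntegrable (fun r : ℝ => (t - r) ^ a * (r - s) ^ b) volume s t := by
  set m := (s + t) / 2 with hm
  have hsm : s < m := by simp only [hm]; linarith
  have hmt : m < t := by simp only [hm]; linarith
  have h1 : IntervalIntegrable (fun r : ℝ => (t - r) ^ a * (r - s) ^ b) volume s m := by
    have base : IntervalIntegrable (fun x : ℝ => x ^ b) volume 0 (m - s) :=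
      intervalIntegral.intervalIntegrable_rpow' hb
    have comp := base.comp_sub_right s
    norm_num at comp
    have : IntervalIntegrable (fun r : ℝ => (r - s) ^ b) volume s m := comp
    apply this.continuousOn_mul
    apply ContinuousOn.rpow_const (by fun_prop)
    intro x hx
    rw [Set.uIcc_of_le hsm.le] at hx
    left
    have := hx.2
    intro h; nlinarith
  have h2 : IntervalIntegrable (fun r : ℝ => (t - r) ^ a * (r - s) ^ b) volume m t := by
    have base : IntervalIntegrable (fun x : ℝ => x ^ a) volume 0 (t - m) :=
      intervalIntegral.intervalIntegrable_rpow' ha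
    have comp := (base.comp_sub_left t).symm
    have h0 : t - (t - m) = m := by ring
    rw [h0, sub_zero] at comp
    apply comp.mul_continuousOn
    apply ContinuousOn.rpow_const (by fun_prop)
    intro x hx
    rw [Set.uIcc_of_le hmt.le] at hx
    left
    have := hx.1
    intro h; nlinarith
  exact h1.trans h2

lemma aux_subst (a b s t : ℝ) (hst : s < t) :
    (∫ r in s..t, (t - r) ^ a * (r - s) ^ b)
      = (t - s) ^ (a + b + 1) * ∫ u in (0:ℝ)..1, u ^ b * (1 - u) ^ a := by
  have hts : 0 < t - s := by linarith
  have key := intervalIntegral.smul_integral_comp_mul_add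
    (f := fun r => (t - r) ^ a * (r - s) ^ b) (a := 0) (b := 1) (t - s) s
  have h0 : (t - s) * 0 + s = s := by ring
  have h1 : (t - s) * 1 + s = t := by ring
  rw [h0, h1] at key
  rw [← key, smul_eq_mul]
  have hcongr : (∫ u in (0:ℝ)..1, (t - ((t - s) * u + s)) ^ a * (((t - s) * u + s) - s) ^ b)
      = ∫ u in (0:ℝ)..1, (t - s) ^ (a + b) * (u ^ b * (1 - u) ^ a) := by
    apply intervalIntegral.integral_congr
    intro u hu
    rw [Set.uIcc_of_le (by norm_num)] at hu
    have hu0 : 0 ≤ u := hu.1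
    have hu1 : 0 ≤ 1 - u := by linarith [hu.2]
    have e1 : t - ((t - s) * u + s) = (t - s) * (1 - u) := by ring
    have e2 : ((t - s) * u + s) - s = (t - s) * u := by ring
    simp only [e1, e2, Real.mul_rpow hts.le hu1, Real.mul_rpow hts.le hu0,
      Real.rpow_add hts]
    ring
  rw [hcongr, intervalIntegral.integral_const_mul, ← mul_assoc]
  congr 1
  rw [Real.rpow_add hts (a + b) 1, Real.rpow_add hts a b, Real.rpow_one]
  ring

/-- Let `0 < η < 1/2` and `0 < β ≤ 1/2` with `1/2 + β - 2η > 0`.  For `0 ≤ s < t`,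
`∫ₛᵗ (t-r)^(-2η) r^(2(β-η)) dr ≤ B(1/2+β, 1-2η) t^(1/2+β-2η) (t-s)^(1/2+β-2η)`. -/
theorem stmt10 (η β : ℝ) (hη0 : 0 < η) (hη1 : η < 1 / 2) (hβ0 : 0 < β) (hβ1 : β ≤ 1 / 2)
    (hpos : 0 < 1 / 2 + β - 2 * η) (hβ2 : -1 < β - 1 / 2)
    (s t : ℝ) (hs : 0 ≤ s) (hst : s < t) :
    (∫ r in s..t, (t - r) ^ (-(2 * η)) * r ^ (2 * (β - η)))
      ≤ betaFn (1 / 2 + β) (1 - 2 * η) * t ^ (1 / 2 + β - 2 * η) * (t - s) ^ (1 / 2 + β - 2 * η) := by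
  have ht0 : 0 < t := lt_of_le_of_lt hs hst
  have ha : (-1 : ℝ) < -(2 * η) := by linarith
  have hab : (-1 : ℝ) < 2 * (β - η) := by linarith
  set p : ℝ := 1 / 2 + β - 2 * η with hp
  -- integrability of LHS integrand
  have hfint : IntervalIntegrable
      (fun r : ℝ => (t - r) ^ (-(2 * η)) * r ^ (2 * (β - η))) volume s t := by
    set m := (s + t) / 2 with hm
    have hsm : s < m := by simp only [hm]; linarith
    have hmt : m < t := by simp only [hm]; linarith
    have hm0 : 0 < m := by simp only [hm]; linarith
    have h1 : IntervalIntegrable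
        (fun r : ℝ => (t - r) ^ (-(2 * η)) * r ^ (2 * (β - η))) volume s m := by
      have base : IntervalIntegrable (fun x : ℝ => x ^ (2 * (β - η))) volume s m :=
        intervalIntegral.intervalIntegrable_rpow' hab
      apply IntervalIntegrable.continuousOn_mul base
      apply ContinuousOn.rpow_const (by fun_prop)
      intro x hx
      rw [Set.uIcc_of_le hsm.le] at hx
      left
      have := hx.2
      intro h; nlinarith
    have h2 : IntervalIntegrable
        (fun r : ℝ => (t - r) ^ (-(2 * η)) * r ^ (2 * (β - η))) volume m t := by
      have base : IntervalIntegrable (fun x : ℝ => x ^ (-(2 * η))) volume 0 (t - m) :=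
        intervalIntegral.intervalIntegrable_rpow' ha
      have comp := (base.comp_sub_left t).symm
      have h0 : t - (t - m) = m := by ring
      rw [h0, sub_zero] at comp
      apply comp.mul_continuousOn
      apply ContinuousOn.rpow_const (by fun_prop)
      intro x hx
      rw [Set.uIcc_of_le hmt.le] at hx
      left
      have := hx.1
      intro h; nlinarith
    exact h1.trans h2
  have hgint : IntervalIntegrable
      (fun r : ℝ => (t - r) ^ (-(2 * η)) * (r - s) ^ (β - 1 / 2) * t ^ p) volume s t :=
    (aux_interval_integrable ha hβ2 hst).mul_const _
  -- pointwise inequality on Ioo s t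
  have hpt : ∀ r ∈ Set.Ioo s t,
      (t - r) ^ (-(2 * η)) * r ^ (2 * (β - η))
        ≤ (t - r) ^ (-(2 * η)) * (r - s) ^ (β - 1 / 2) * t ^ p := by
    intro r hr
    have hr0 : 0 < r := lt_of_le_of_lt hs hr.1
    have hrs : 0 < r - s := by linarith [hr.1]
    have hrt : r ≤ t := hr.2.le
    have e : r ^ (2 * (β - η)) = r ^ (β - 1 / 2) * r ^ p := by
      rw [← Real.rpow_add hr0]
      congr 1
      simp only [hp]; ring
    have h1 : r ^ (β - 1 / 2) ≤ (r - s) ^ (β - 1 / 2) :=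
      Real.rpow_le_rpow_of_nonpos hrs (by linarith [hr.1]) (by linarith)
    have h2 : r ^ p ≤ t ^ p := Real.rpow_le_rpow hr0.le hrt hpos.le
    have htr : 0 ≤ (t - r) ^ (-(2 * η)) := Real.rpow_nonneg (by linarith [hr.2]) _
    calc (t - r) ^ (-(2 * η)) * r ^ (2 * (β - η))
        = (t - r) ^ (-(2 * η)) * (r ^ (β - 1 / 2) * r ^ p) := by rw [e]
      _ ≤ (t - r) ^ (-(2 * η)) * ((r - s) ^ (β - 1 / 2) * t ^ p) := by
          apply mul_le_mul_of_nonneg_left _ htr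
          exact mul_le_mul h1 h2 (Real.rpow_nonneg hr0.le _) (Real.rpow_nonneg (by linarith) _)
      _ = (t - r) ^ (-(2 * η)) * (r - s) ^ (β - 1 / 2) * t ^ p := by ring
  have hae : (fun r : ℝ => (t - r) ^ (-(2 * η)) * r ^ (2 * (β - η)))
      ≤ᵐ[volume.restrict (Set.Icc s t)]
      (fun r : ℝ => (t - r) ^ (-(2 * η)) * (r - s) ^ (β - 1 / 2) * t ^ p) := by
    rw [← Measure.restrict_congr_set (Ioo_ae_eq_Icc)]
    filter_upwards [ae_restrict_mem measurableSet_Ioo] with r hr using hpt r hr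
  have hmono := intervalIntegral.integral_mono_ae_restrict hst.le hfint hgint hae
  refine hmono.trans_eq ?_
  have : (∫ r in s..t, (t - r) ^ (-(2 * η)) * (r - s) ^ (β - 1 / 2) * t ^ p)
      = (∫ r in s..t, (t - r) ^ (-(2 * η)) * (r - s) ^ (β - 1 / 2)) * t ^ p := by
    rw [intervalIntegral.integral_mul_const]
  rw [this, aux_subst _ _ _ _ hst]
  have hexp : -(2 * η) + (β - 1 / 2) + 1 = p := by simp only [hp]; ring
  have hbeta : betaFn (1 / 2 + β) (1 - 2 * η)
      = ∫ u in (0:ℝ)..1, u ^ (β - 1 / 2) * (1 - u) ^ (-(2 * η)) := by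
    unfold betaFn
    apply intervalIntegral.integral_congr
    intro u hu
    have e1 : 1 / 2 + β - 1 = β - 1 / 2 := by ring
    have e2 : 1 - 2 * η - 1 = -(2 * η) := by ring
    rw [e1, e2]
  rw [hexp, hbeta]
  ring
end

section
/- Gronwall-type lemma with weight: Let $0<a\le b$, $\mu>0$, $\nu>0$. Let $f:[0,\infty)\to[0,\infty)$ be continuous and increasing, and $\varphi:[a,b]\to[0,\infty)$ bounded. If $\varphi(t)\le f(t)+a^{-\mu}\int_a^t (t-r)^{\nu-1}\varphi(r)\,dr$ for all $a\le t\le b$, then there exists $c>0$ such that $\varphi(t)\le c f(t)$ for all $a\le t\le b$. -/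
open MeasureTheory Set

/-!
With the Bielecki-type weight `E t = exp (β (t - a))`, where `β` is chosen so that
`K Γ(ν) / β ^ ν = 1 / 2`, the substitution `s = t - r` and Euler's integral for `Γ`
give `K ∫ₐᵗ (t - r) ^ (ν - 1) E r dr ≤ E t / 2`. Since `f` is increasing, a bound
`φ ≤ (2 f + m) E` on `[a, b]` therefore improves to `φ ≤ (2 f + m / 2) E`. Starting from
`m = sup φ` and iterating gives `φ ≤ 2 f E ≤ 2 E(b) f`.
-/

lemma intervalIntegrable_sub_rpow {ν : ℝ} (hν : 0 < ν) (t p q : ℝ) :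
    IntervalIntegrable (fun r : ℝ => (t - r) ^ (ν - 1)) volume p q := by
  simpa using (intervalIntegral.intervalIntegrable_rpow' (r := ν - 1) (a := t - p) (b := t - q)
    (by linarith)).comp_sub_left t

lemma IntervalIntegrable.mul_bdd_on {g φ : ℝ → ℝ} {p q C : ℝ}
    (hg : IntervalIntegrable g volume p q) (hφ : Measurable φ)
    (hφC : ∀ r ∈ uIcc p q, |φ r| ≤ C) :
    IntervalIntegrable (fun r => g r * φ r) volume p q := by
  rw [intervalIntegrable_iff] at hg ⊢
  exact hg.mul_bdd hφ.aestronglyMeasurable <|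
    ae_restrict_of_forall_mem measurableSet_uIoc fun r hr => hφC r (uIoc_subset_uIcc hr)

lemma integral_rpow_mul_exp_neg_mul_le {ν β T : ℝ} (hν : 0 < ν) (hβ : 0 < β)
    (hT : 0 ≤ T) :
    ∫ s in (0)..T, s ^ (ν - 1) * Real.exp (-(β * s)) ≤ (1 / β) ^ ν * Real.Gamma ν := by
  have hint : IntegrableOn (fun s : ℝ => s ^ (ν - 1) * Real.exp (-(β * s))) (Ioi 0) := by
    simpa using integrableOn_rpow_mul_exp_neg_mul_rpow (p := 1) (by linarith) one_pos hβ
  rw [intervalIntegral.integral_of_le hT, ← Real.integral_rpow_mul_exp_neg_mul_Ioi hν hβ]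
  refine setIntegral_mono_set hint ?_ Ioc_subset_Ioi_self.eventuallyLE
  filter_upwards [ae_restrict_mem measurableSet_Ioi] with s hs
  exact mul_nonneg (Real.rpow_nonneg (hs.le) _) (Real.exp_pos _).le

lemma integral_sub_rpow_mul_exp_le {ν β a t : ℝ} (hν : 0 < ν) (hβ : 0 < β) (hat : a ≤ t) :
    ∫ r in a..t, (t - r) ^ (ν - 1) * Real.exp (β * (r - a))
      ≤ (1 / β) ^ ν * Real.Gamma ν * Real.exp (β * (t - a)) := by
  have hsplit : ∀ r, (t - r) ^ (ν - 1) * Real.exp (β * (r - a))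
      = Real.exp (β * (t - a)) * ((t - r) ^ (ν - 1) * Real.exp (-(β * (t - r)))) := by
    intro r
    rw [mul_left_comm, ← Real.exp_add]
    ring_nf
  simp_rw [hsplit]
  rw [intervalIntegral.integral_const_mul,
    intervalIntegral.integral_comp_sub_left (fun s => s ^ (ν - 1) * Real.exp (-(β * s))),
    sub_self, mul_comm]
  exact mul_le_mul_of_nonneg_right
    (integral_rpow_mul_exp_neg_mul_le hν hβ (sub_nonneg.2 hat)) (Real.exp_pos _).le

lemma le_two_mul_add_half_mul_exp {a b K ν β : ℝ} {f φ : ℝ → ℝ}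
    (hK : 0 ≤ K) (hν : 0 < ν) (hβ : 0 < β)
    (hKβ : K * ((1 / β) ^ ν * Real.Gamma ν) ≤ 1 / 2)
    (hf_mono : MonotoneOn f (Icc a b)) (hf_nonneg : ∀ t ∈ Icc a b, 0 ≤ f t)
    (hφ_meas : Measurable φ) (hφ_nonneg : ∀ t ∈ Icc a b, 0 ≤ φ t)
    (h : ∀ t ∈ Icc a b, φ t ≤ f t + K * ∫ r in a..t, (t - r) ^ (ν - 1) * φ r)
    {m : ℝ} (hφm : ∀ t ∈ Icc a b, φ t ≤ (2 * f t + m) * Real.exp (β * (t - a)))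
    {t : ℝ} (ht : t ∈ Icc a b) :
    φ t ≤ (2 * f t + m / 2) * Real.exp (β * (t - a)) := by
  set E : ℝ → ℝ := fun r => Real.exp (β * (r - a))
  set C := 2 * f t + m
  have hsub : Icc a t ⊆ Icc a b := Icc_subset_Icc_right ht.2
  have hφC : ∀ r ∈ Icc a t, φ r ≤ C * E r := fun r hr =>
    (hφm r (hsub hr)).trans <| mul_le_mul_of_nonneg_right
      (by linarith [hf_mono (hsub hr) ht hr.2]) (Real.exp_pos _).le
  have hE_mono : ∀ r ∈ Icc a t, E r ≤ E t := fun r hr =>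
    Real.exp_le_exp.2 (by nlinarith [hr.2])
  have hC : 0 ≤ C :=
    nonneg_of_mul_nonneg_left ((hφ_nonneg t ht).trans (hφm t ht)) (Real.exp_pos _)
  have hint : ∫ r in a..t, (t - r) ^ (ν - 1) * φ r
      ≤ C * ∫ r in a..t, (t - r) ^ (ν - 1) * E r := by
    rw [← intervalIntegral.integral_const_mul]
    refine intervalIntegral.integral_mono_on ht.1 ?_ ?_ fun r hr => ?_
    · refine (intervalIntegrable_sub_rpow hν t a t).mul_bdd_on hφ_meas (C := C * E t)
        fun r hr => ?_
      rw [uIcc_of_le ht.1] at hr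
      rw [abs_of_nonneg (hφ_nonneg r (hsub hr))]
      exact (hφC r hr).trans (mul_le_mul_of_nonneg_left (hE_mono r hr) hC)
    · exact ((intervalIntegrable_sub_rpow hν t a t).mul_continuousOn
        (by fun_prop)).const_mul C
    · have hker : 0 ≤ (t - r) ^ (ν - 1) := Real.rpow_nonneg (by linarith [hr.2]) _
      calc (t - r) ^ (ν - 1) * φ r ≤ (t - r) ^ (ν - 1) * (C * E r) :=
            mul_le_mul_of_nonneg_left (hφC r hr) hker
        _ = C * ((t - r) ^ (ν - 1) * E r) := by ring
  have hkernel : K * ∫ r in a..t, (t - r) ^ (ν - 1) * E r ≤ E t / 2 := by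
    calc K * ∫ r in a..t, (t - r) ^ (ν - 1) * E r
        ≤ K * ((1 / β) ^ ν * Real.Gamma ν * E t) :=
          mul_le_mul_of_nonneg_left (integral_sub_rpow_mul_exp_le hν hβ ht.1) hK
      _ = K * ((1 / β) ^ ν * Real.Gamma ν) * E t := by ring
      _ ≤ 1 / 2 * E t := mul_le_mul_of_nonneg_right hKβ (Real.exp_pos _).le
      _ = E t / 2 := by ring
  have hE_one : 1 ≤ E t := Real.one_le_exp (by nlinarith [ht.1])
  have hft := hf_nonneg t ht
  calc φ t ≤ f t + K * ∫ r in a..t, (t - r) ^ (ν - 1) * φ r := h t ht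
    _ ≤ f t + C * (E t / 2) := by
        have := mul_le_mul_of_nonneg_left hint hK
        nlinarith
    _ ≤ (2 * f t + m / 2) * E t := by nlinarith

lemma exists_pos_mul_one_div_rpow_mul_Gamma_eq {K ν : ℝ} (hK : 0 < K) (hν : 0 < ν) :
    ∃ β > 0, K * ((1 / β) ^ ν * Real.Gamma ν) = 1 / 2 := by
  have hΓ := Real.Gamma_pos_of_pos hν
  refine ⟨(2 * K * Real.Gamma ν) ^ ν⁻¹, by positivity, ?_⟩
  rw [Real.div_rpow zero_le_one (by positivity), Real.one_rpow,
    Real.rpow_inv_rpow (by positivity) hν.ne']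
  field_simp

lemma le_of_forall_le_add_div_two_pow {x y m : ℝ} (h : ∀ n : ℕ, x ≤ y + m / 2 ^ n) :
    x ≤ y := by
  have hlim : Filter.Tendsto (fun n : ℕ => y + m / 2 ^ n) Filter.atTop (nhds y) := by
    simpa using (tendsto_const_nhds (x := y)).add
      ((tendsto_const_nhds (x := m)).div_atTop (tendsto_pow_atTop_atTop_of_one_lt one_lt_two))
  exact ge_of_tendsto' hlim h

theorem exists_le_mul_of_le_add_mul_integral_sub_rpow {a b K ν : ℝ} {f φ : ℝ → ℝ}
    (hK : 0 < K) (hν : 0 < ν)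
    (hf_mono : MonotoneOn f (Icc a b)) (hf_nonneg : ∀ t ∈ Icc a b, 0 ≤ f t)
    (hφ_meas : Measurable φ) (hφ_nonneg : ∀ t ∈ Icc a b, 0 ≤ φ t)
    (hφ_bdd : ∃ M : ℝ, ∀ t ∈ Icc a b, φ t ≤ M)
    (h : ∀ t ∈ Icc a b, φ t ≤ f t + K * ∫ r in a..t, (t - r) ^ (ν - 1) * φ r) :
    ∃ c : ℝ, 0 < c ∧ ∀ t ∈ Icc a b, φ t ≤ c * f t := by
  obtain ⟨β, hβ, hKβ⟩ := exists_pos_mul_one_div_rpow_mul_Gamma_eq hK hν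
  obtain ⟨M, hM⟩ := hφ_bdd
  have hφ_le : ∀ n : ℕ, ∀ t ∈ Icc a b,
      φ t ≤ (2 * f t + max M 0 / 2 ^ n) * Real.exp (β * (t - a)) := by
    intro n
    induction n with
    | zero =>
      intro t ht
      have hE : 1 ≤ Real.exp (β * (t - a)) := Real.one_le_exp (by nlinarith [ht.1])
      have : φ t ≤ 2 * f t + max M 0 := by linarith [hM t ht, le_max_left M 0, hf_nonneg t ht]
      nlinarith [le_max_right M 0, hf_nonneg t ht]
    | succ n ih =>
      intro t ht
      rw [pow_succ, ← div_div]
      exact le_two_mul_add_half_mul_exp hK.le hν hβ hKβ.le hf_mono hf_nonneg hφ_meas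
        hφ_nonneg h ih ht
  refine ⟨2 * Real.exp (β * (b - a)), by positivity, fun t ht => ?_⟩
  have hφt : φ t ≤ 2 * f t * Real.exp (β * (t - a)) :=
    le_of_forall_le_add_div_two_pow (m := max M 0 * Real.exp (β * (t - a))) fun n =>
      (hφ_le n t ht).trans_eq (by ring)
  have hE : Real.exp (β * (t - a)) ≤ Real.exp (β * (b - a)) :=
    Real.exp_le_exp.2 (by nlinarith [ht.2])
  calc φ t ≤ 2 * f t * Real.exp (β * (t - a)) := hφt
    _ ≤ 2 * f t * Real.exp (β * (b - a)) := by gcongr; linarith [hf_nonneg t ht]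
    _ = 2 * Real.exp (β * (b - a)) * f t := by ring

theorem stmt11_general (a b μ ν : ℝ) (ha : 0 < a) (hν : 0 < ν)
    (f : ℝ → ℝ) (hf_mono : Monotone f)
    (hf_nonneg : ∀ t : ℝ, 0 ≤ t → 0 ≤ f t)
    (φ : ℝ → ℝ) (hφ_meas : Measurable φ)
    (hφ_nonneg : ∀ t ∈ Icc a b, 0 ≤ φ t)
    (hφ_bdd : ∃ M : ℝ, ∀ t ∈ Icc a b, φ t ≤ M)
    (h : ∀ t ∈ Icc a b, φ t ≤ f t + a ^ (-μ) * ∫ r in a..t, (t - r) ^ (ν - 1) * φ r) :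
    ∃ c : ℝ, 0 < c ∧ ∀ t ∈ Icc a b, φ t ≤ c * f t :=
  exists_le_mul_of_le_add_mul_integral_sub_rpow (Real.rpow_pos_of_pos ha _) hν
    (hf_mono.monotoneOn _) (fun t ht => hf_nonneg t (ha.le.trans ht.1)) hφ_meas hφ_nonneg
    hφ_bdd h

/-- Gronwall-type lemma with singular kernel and weight: let `0 < a ≤ b`, `μ, ν > 0`,
let `f : [0,∞) → [0,∞)` be continuous and increasing, and `φ : [a,b] → [0,∞)` be bounded
(and measurable).  If `φ(t) ≤ f(t) + a^(-μ) ∫ₐᵗ (t-r)^(ν-1) φ(r) dr` for all `a ≤ t ≤ b`,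
then there exists `c > 0` with `φ(t) ≤ c f(t)` for all `a ≤ t ≤ b`. -/
theorem stmt11 (a b μ ν : ℝ) (ha : 0 < a) (hab : a ≤ b) (hμ : 0 < μ) (hν : 0 < ν)
    (f : ℝ → ℝ) (hf_cont : Continuous f) (hf_mono : Monotone f)
    (hf_nonneg : ∀ t : ℝ, 0 ≤ t → 0 ≤ f t)
    (φ : ℝ → ℝ) (hφ_meas : Measurable φ)
    (hφ_nonneg : ∀ t ∈ Icc a b, 0 ≤ φ t)
    (hφ_bdd : ∃ M : ℝ, ∀ t ∈ Icc a b, φ t ≤ M)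
    (h : ∀ t ∈ Icc a b, φ t ≤ f t + a ^ (-μ) * ∫ r in a..t, (t - r) ^ (ν - 1) * φ r) :
    ∃ c : ℝ, 0 < c ∧ ∀ t ∈ Icc a b, φ t ≤ c * f t :=
  stmt11_general a b μ ν ha hν f hf_mono hf_nonneg φ hφ_meas hφ_nonneg hφ_bdd h
end
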